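/- arXiv:math/9902131 — 3 statements merged into one kernel-verified Lean document; each statement's English description precedes it below -/
import Mathlib

section
/- Let n, m, n̂, m̂ ∈ V be spacelike vectors with B n n = B m m = B n̂ n̂ = B m̂ m̂ = 1, and assume span{n} ≠ span{m} and span{n̂} ≠ span{m̂} (so that the corresponding hyperspheres S(n) ≠ S(m) and S(n̂) ≠ S(m̂) are distinct). Then there exists a linear equivalence g : V → V satisfying B (g x) (g y) = B x y for all x, y ∈ V, g(span{n}) = span{n̂}, and g(span{m}) = span{m̂}, if and only if |B n m| = |B n̂ m̂|. -/
noncomputable section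

/-- The Minkowski bilinear form of index 1 on `ℝ^{n+2}`:
`B x y = ∑_{i=0}^{n} x i * y i − x (n+1) * y (n+1)`. -/
def mB (n : ℕ) : (Fin (n+2) → ℝ) →ₗ[ℝ] (Fin (n+2) → ℝ) →ₗ[ℝ] ℝ :=
  LinearMap.mk₂ ℝ
    (fun x y => ∑ i : Fin (n+2), (if (i : ℕ) = n+1 then (-1:ℝ) else 1) * x i * y i)
    (fun x x' y => by
      rw [← Finset.sum_add_distrib]
      exact Finset.sum_congr rfl fun i _ => by simp only [Pi.add_apply]; ring)
    (fun c x y => by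
      rw [smul_eq_mul, Finset.mul_sum]
      exact Finset.sum_congr rfl fun i _ => by simp only [Pi.smul_apply, smul_eq_mul]; ring)
    (fun x y y' => by
      rw [← Finset.sum_add_distrib]
      exact Finset.sum_congr rfl fun i _ => by simp only [Pi.add_apply]; ring)
    (fun c x y => by
      rw [smul_eq_mul, Finset.mul_sum]
      exact Finset.sum_congr rfl fun i _ => by simp only [Pi.smul_apply, smul_eq_mul]; ring)

/-- The orthogonal complement `S^⊥ = {x | ∀ s ∈ S, B x s = 0}` w.r.t. the Minkowski form. -/
def mperp (n : ℕ) (S : Submodule ℝ (Fin (n+2) → ℝ)) : Submodule ℝ (Fin (n+2) → ℝ) where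
  carrier := {x | ∀ s ∈ S, mB n x s = 0}
  zero_mem' := fun s _ => by simp
  add_mem' := fun ha hb s hs => by simp [ha s hs, hb s hs]
  smul_mem' := fun c a ha s hs => by simp [ha s hs]

/-- A subspace is pseudo-euclidean if the Minkowski form restricted to it
is nondegenerate and it contains a timelike vector. -/
def IsPseudoEuclidean (n : ℕ) (S : Submodule ℝ (Fin (n+2) → ℝ)) : Prop :=
  (∀ x ∈ S, (∀ y ∈ S, mB n x y = 0) → x = 0) ∧ ∃ x ∈ S, mB n x x < 0

namespace MBaux

variable {n : ℕ}

lemma mB_apply (x y : Fin (n+2) → ℝ) :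
    mB n x y = ∑ i : Fin (n+2), (if (i : ℕ) = n+1 then (-1:ℝ) else 1) * x i * y i := rfl

lemma mB_symm (x y : Fin (n+2) → ℝ) : mB n x y = mB n y x := by
  simp only [mB_apply]; exact Finset.sum_congr rfl fun i _ => by ring

lemma mB_single_right (x : Fin (n+2) → ℝ) (j : Fin (n+2)) (c : ℝ) :
    mB n x (Pi.single j c) = (if (j : ℕ) = n+1 then (-1:ℝ) else 1) * x j * c := by
  rw [mB_apply]
  rw [Finset.sum_eq_single j]
  · simp
  · intro i _ hij; simp [Pi.single_apply, hij]
  · simp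

lemma mB_single_left (x : Fin (n+2) → ℝ) (j : Fin (n+2)) (c : ℝ) :
    mB n (Pi.single j c) x = (if (j : ℕ) = n+1 then (-1:ℝ) else 1) * x j * c := by
  rw [mB_symm]; exact mB_single_right x j c


/-- Reflection in the hyperplane orthogonal to `w`. -/
def reflL (w : Fin (n+2) → ℝ) : (Fin (n+2) → ℝ) →ₗ[ℝ] (Fin (n+2) → ℝ) :=
  LinearMap.id - (((2 / mB n w w) • ((mB n).flip w)).smulRight w)

lemma reflL_apply (w x : Fin (n+2) → ℝ) :
    reflL w x = x - ((2 / mB n w w) * mB n x w) • w := rfl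

lemma mB_reflL (w : Fin (n+2) → ℝ) (hw : mB n w w ≠ 0) (x y : Fin (n+2) → ℝ) :
    mB n (reflL w x) (reflL w y) = mB n x y := by
  simp only [reflL_apply, map_sub, map_smul, LinearMap.sub_apply, LinearMap.smul_apply,
    smul_eq_mul]
  field_simp
  rw [mB_symm w y]
  ring

lemma mB_reflL_right (w : Fin (n+2) → ℝ) (hw : mB n w w ≠ 0) (x : Fin (n+2) → ℝ) :
    mB n (reflL w x) w = -(mB n x w) := by
  simp only [reflL_apply, map_sub, map_smul, LinearMap.sub_apply, LinearMap.smul_apply,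
    smul_eq_mul]
  field_simp
  ring

lemma reflL_invol (w : Fin (n+2) → ℝ) (hw : mB n w w ≠ 0) (x : Fin (n+2) → ℝ) :
    reflL w (reflL w x) = x := by
  rw [reflL_apply w (reflL w x), mB_reflL_right w hw x, reflL_apply]
  have h : 2 / mB n w w * -(mB n x w) = -(2 / mB n w w * mB n x w) := by ring
  rw [h, neg_smul, sub_neg_eq_add]
  abel

lemma reflL_fix (w x : Fin (n+2) → ℝ) (h : mB n x w = 0) : reflL w x = x := by
  simp [reflL_apply, h]

lemma reflL_self (w : Fin (n+2) → ℝ) (hw : mB n w w ≠ 0) : reflL w w = -w := by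
  rw [reflL_apply]
  have : 2 / mB n w w * mB n w w = 2 := by field_simp
  rw [this]
  module

lemma reflL_sends (u u' : Fin (n+2) → ℝ) (h1 : mB n u u = mB n u' u')
    (h2 : mB n (u - u') (u - u') ≠ 0) : reflL (u - u') u = u' := by
  have hexp : mB n (u - u') (u - u') = 2 * (mB n u u - mB n u u') := by
    simp only [map_sub, LinearMap.sub_apply]
    rw [mB_symm u' u, ← h1]; ring
  have h3 : mB n u u - mB n u u' ≠ 0 := by
    intro h; exact h2 (by rw [hexp, h, mul_zero])
  have hco : 2 / mB n (u - u') (u - u') * mB n u (u - u') = 1 := by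
    have : mB n u (u - u') = mB n u u - mB n u u' := by simp [map_sub]
    rw [this, hexp]
    field_simp
  rw [reflL_apply, hco, one_smul]
  abel

/-- Reflection as a linear equivalence. -/
def reflE (w : Fin (n+2) → ℝ) (hw : mB n w w ≠ 0) :
    (Fin (n+2) → ℝ) ≃ₗ[ℝ] (Fin (n+2) → ℝ) :=
  LinearEquiv.ofLinear (reflL w) (reflL w)
    (LinearMap.ext fun x => reflL_invol w hw x)
    (LinearMap.ext fun x => reflL_invol w hw x)

lemma reflE_apply (w : Fin (n+2) → ℝ) (hw : mB n w w ≠ 0) (x : Fin (n+2) → ℝ) :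
    reflE w hw x = reflL w x := rfl


/-- Transitivity of the orthogonal group on vectors of equal nonzero norm,
fixing everything orthogonal to both. -/
lemma exists_isometry_nonzero (u u' : Fin (n+2) → ℝ)
    (hc : mB n u u = mB n u' u') (hc0 : mB n u u ≠ 0) :
    ∃ g : (Fin (n+2) → ℝ) ≃ₗ[ℝ] (Fin (n+2) → ℝ),
      (∀ x y, mB n (g x) (g y) = mB n x y) ∧ g u = u' ∧
      (∀ x, mB n x u = 0 → mB n x u' = 0 → g x = x) := by
  by_cases hQ : mB n (u - u') (u - u') ≠ 0
  · refine ⟨reflE (u - u') hQ, fun x y => mB_reflL _ hQ x y, reflL_sends u u' hc hQ, ?_⟩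
    intro x hxu hxu'
    exact reflL_fix (u - u') x (by rw [map_sub, hxu, hxu', sub_zero])
  · push_neg at hQ
    have hQ' : mB n (u + u') (u + u') ≠ 0 := by
      have hsum : mB n (u - u') (u - u') + mB n (u + u') (u + u') = 4 * mB n u u := by
        simp only [map_sub, map_add, LinearMap.sub_apply, LinearMap.add_apply]
        rw [mB_symm u' u, ← hc]; ring
      intro h
      rw [hQ, h] at hsum
      simp at hsum
      exact hc0 hsum
    have hu' : mB n u' u' ≠ 0 := hc ▸ hc0
    refine ⟨(reflE (u + u') hQ').trans (reflE u' hu'), ?_, ?_, ?_⟩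
    · intro x y
      simp only [LinearEquiv.trans_apply, reflE_apply]
      rw [mB_reflL _ hu', mB_reflL _ hQ']
    · simp only [LinearEquiv.trans_apply, reflE_apply]
      have h1 : reflL (u + u') u = -u' := by
        have := reflL_sends u (-u') (by simp [hc]) (by rwa [sub_neg_eq_add])
        rwa [sub_neg_eq_add] at this
      rw [h1, map_neg, reflL_self u' hu', neg_neg]
    · intro x hxu hxu'
      simp only [LinearEquiv.trans_apply, reflE_apply]
      rw [reflL_fix (u + u') x (by rw [map_add, hxu, hxu', add_zero]),
        reflL_fix u' x hxu']

/-- If `u` is isotropic, vanishes at coordinate `0`, and is nonzero,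
then its last coordinate is nonzero. -/
lemma last_ne_zero (u : Fin (n+2) → ℝ) (h0 : u 0 = 0) (hiso : mB n u u = 0)
    (hne : u ≠ 0) : u (Fin.last (n+1)) ≠ 0 := by
  intro hl
  apply hne
  have hsum : mB n u u = ∑ i : Fin (n+2), (u i)^2 := by
    rw [mB_apply]
    refine Finset.sum_congr rfl fun i _ => ?_
    by_cases hi : (i : ℕ) = n + 1
    · have : i = Fin.last (n+1) := by
        apply Fin.ext; simpa using hi
      rw [this, hl]; simp
    · simp [hi]; ring
  rw [hiso] at hsum
  have hall : ∀ i ∈ Finset.univ, (u i)^2 = 0 := by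
    intro i _
    have := (Finset.sum_eq_zero_iff_of_nonneg (fun i _ => sq_nonneg (u i))).mp hsum.symm
    exact this i (Finset.mem_univ i)
  funext i
  have := hall i (Finset.mem_univ i)
  exact pow_eq_zero_iff (by norm_num) |>.mp this

lemma mB_e0 (x : Fin (n+2) → ℝ) : mB n x (Pi.single (0 : Fin (n+2)) (1:ℝ)) = x 0 := by
  rw [mB_single_right]
  simp

/-- Transitivity on nonzero isotropic vectors orthogonal to `e₀`, fixing `e₀`. -/
lemma exists_isometry_isotropic (u u' : Fin (n+2) → ℝ)
    (h0 : u 0 = 0) (h0' : u' 0 = 0) (hiso : mB n u u = 0) (hiso' : mB n u' u' = 0)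
    (hne : u ≠ 0) (hne' : u' ≠ 0) :
    ∃ g : (Fin (n+2) → ℝ) ≃ₗ[ℝ] (Fin (n+2) → ℝ),
      (∀ x y, mB n (g x) (g y) = mB n x y) ∧ g u = u' ∧
      g (Pi.single (0 : Fin (n+2)) (1:ℝ)) = Pi.single (0 : Fin (n+2)) (1:ℝ) := by
  by_cases hB : mB n u u' ≠ 0
  · have hQ : mB n (u - u') (u - u') ≠ 0 := by
      have h : mB n (u - u') (u - u') = -(2 * mB n u u') := by
        simp only [map_sub, LinearMap.sub_apply]
        rw [mB_symm u' u, hiso, hiso']; ring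
      rw [h]; simpa using hB
    refine ⟨reflE (u - u') hQ, fun x y => mB_reflL _ hQ x y,
      reflL_sends u u' (by rw [hiso, hiso']) hQ, ?_⟩
    apply reflL_fix
    rw [map_sub, mB_symm _ u, mB_symm _ u', mB_e0, mB_e0, h0, h0', sub_zero]
  · push_neg at hB
    have hl0 : (Fin.last (n+1) : Fin (n+2)) ≠ 0 := by
      intro h
      have := congrArg Fin.val h
      simp [Fin.val_last] at this
    have hw1n : mB n (Pi.single (Fin.last (n+1)) (1:ℝ)) (Pi.single (Fin.last (n+1)) 1)
        = -1 := by
      rw [mB_single_right]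
      simp [Fin.val_last]
    have hw1ne : mB n (Pi.single (Fin.last (n+1)) (1:ℝ)) (Pi.single (Fin.last (n+1)) 1)
        ≠ 0 := by rw [hw1n]; norm_num
    have hul : u (Fin.last (n+1)) ≠ 0 := last_ne_zero u h0 hiso hne
    have hul' : u' (Fin.last (n+1)) ≠ 0 := last_ne_zero u' h0' hiso' hne'
    have ha : mB n u (Pi.single (Fin.last (n+1)) 1) = -(u (Fin.last (n+1))) := by
      rw [mB_single_right]; simp [Fin.val_last]
    have hb : mB n (Pi.single (Fin.last (n+1)) (1:ℝ)) u' = -(u' (Fin.last (n+1))) := by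
      rw [mB_single_left]; simp [Fin.val_last]
    set u2 : Fin (n+2) → ℝ := reflL (Pi.single (Fin.last (n+1)) 1) u with hu2
    have hu2iso : mB n u2 u2 = 0 := by rw [hu2, mB_reflL _ hw1ne, hiso]
    have hu2B : mB n u2 u' ≠ 0 := by
      rw [hu2, reflL_apply, map_sub, LinearMap.sub_apply, map_smul, LinearMap.smul_apply,
        smul_eq_mul, hB, hw1n, ha, hb]
      have h : (0:ℝ) - 2 / (-1) * (-(u (Fin.last (n+1)))) * (-(u' (Fin.last (n+1))))
          = 2 * (u (Fin.last (n+1)) * u' (Fin.last (n+1))) := by ring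
      rw [h]
      exact mul_ne_zero (by norm_num) (mul_ne_zero hul hul')
    have hQ2 : mB n (u2 - u') (u2 - u') ≠ 0 := by
      have h : mB n (u2 - u') (u2 - u') = -(2 * mB n u2 u') := by
        simp only [map_sub, LinearMap.sub_apply]
        rw [mB_symm u' u2, hu2iso, hiso']; ring
      rw [h]; simpa using hu2B
    have he0w1 : mB n (Pi.single (0 : Fin (n+2)) (1:ℝ)) (Pi.single (Fin.last (n+1)) 1)
        = 0 := by
      rw [mB_single_right]
      rw [Pi.single_eq_of_ne hl0]
      ring
    have he0u : mB n (Pi.single (0 : Fin (n+2)) (1:ℝ)) u = 0 := by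
      rw [mB_symm, mB_e0, h0]
    have he0u' : mB n (Pi.single (0 : Fin (n+2)) (1:ℝ)) u' = 0 := by
      rw [mB_symm, mB_e0, h0']
    have he0u2 : mB n (Pi.single (0 : Fin (n+2)) (1:ℝ)) u2 = 0 := by
      rw [hu2, reflL_apply, map_sub, map_smul, smul_eq_mul, he0u, he0w1]
      simp
    have he0d : mB n (Pi.single (0 : Fin (n+2)) (1:ℝ)) (u2 - u') = 0 := by
      rw [map_sub, he0u2, he0u', sub_zero]
    refine ⟨(reflE (Pi.single (Fin.last (n+1)) 1) hw1ne).trans (reflE (u2 - u') hQ2),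
      ?_, ?_, ?_⟩
    · intro x y
      simp only [LinearEquiv.trans_apply, reflE_apply]
      rw [mB_reflL _ hQ2, mB_reflL _ hw1ne]
    · simp only [LinearEquiv.trans_apply, reflE_apply]
      rw [← hu2]
      exact reflL_sends u2 u' (by rw [hu2iso, hiso']) hQ2
    · simp only [LinearEquiv.trans_apply, reflE_apply]
      rw [reflL_fix (Pi.single (Fin.last (n+1)) 1) _ he0w1,
        reflL_fix (u2 - u') _ he0d]


def e0v (n : ℕ) : Fin (n+2) → ℝ := Pi.single 0 1

def e1v (n : ℕ) : Fin (n+2) → ℝ := Pi.single 1 1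

def eLv (n : ℕ) : Fin (n+2) → ℝ := Pi.single (Fin.last (n+1)) 1

/-- The canonical second vector of a normalized pair of spacelike unit vectors
with scalar product `t`. -/
def canon (n : ℕ) (t : ℝ) : Fin (n+2) → ℝ :=
  t • e0v n + ((2 - t^2)/2) • e1v n + (-(t^2)/2) • eLv n

lemma val_one_eq : ((1 : Fin (n+2)) : ℕ) = 1 := by
  rw [Fin.val_one']
  exact Nat.mod_eq_of_lt (by omega)

lemma one_ne_last (hn : 0 < n) : (1 : Fin (n+2)) ≠ Fin.last (n+1) := by
  intro h
  have h2 := congrArg Fin.val h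
  rw [val_one_eq, Fin.val_last] at h2
  omega

lemma zero_ne_last' : (0 : Fin (n+2)) ≠ Fin.last (n+1) := by
  intro h
  have h2 := congrArg Fin.val h
  rw [Fin.val_zero, Fin.val_last] at h2
  omega

lemma zero_ne_one' : (0 : Fin (n+2)) ≠ 1 := by
  intro h
  have h2 := congrArg Fin.val h
  rw [Fin.val_zero, val_one_eq] at h2
  omega

lemma one_val_ne (hn : 0 < n) : ((1 : Fin (n+2)) : ℕ) ≠ n + 1 := by
  rw [val_one_eq]; omega

lemma mB_e0v (x : Fin (n+2) → ℝ) : mB n x (e0v n) = x 0 := mB_e0 x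

lemma mB_e0v' (x : Fin (n+2) → ℝ) : mB n (e0v n) x = x 0 := by
  rw [mB_symm]; exact mB_e0v x

lemma e0v_at0 : e0v n 0 = 1 := Pi.single_eq_same 0 1

lemma e1v_at0 : e1v n 0 = 0 := Pi.single_eq_of_ne zero_ne_one' 1

lemma eLv_at0 : eLv n 0 = 0 := Pi.single_eq_of_ne zero_ne_last' 1

lemma e1v_at1 : e1v n 1 = 1 := Pi.single_eq_same 1 1

lemma eLv_at1 (hn : 0 < n) : eLv n 1 = 0 := Pi.single_eq_of_ne (one_ne_last hn) 1

lemma e1v_atL (hn : 0 < n) : e1v n (Fin.last (n+1)) = 0 :=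
  Pi.single_eq_of_ne (one_ne_last hn).symm 1

lemma eLv_atL : eLv n (Fin.last (n+1)) = 1 := Pi.single_eq_same _ 1

lemma e0v_e0v : mB n (e0v n) (e0v n) = 1 := by
  rw [mB_e0v, e0v_at0]

lemma e1v_e1v (hn : 0 < n) : mB n (e1v n) (e1v n) = 1 := by
  show mB n (e1v n) (Pi.single 1 1) = 1
  rw [mB_single_right, if_neg (one_val_ne hn)]
  rw [e1v_at1]
  ring

lemma eLv_eLv : mB n (eLv n) (eLv n) = -1 := by
  show mB n (eLv n) (Pi.single (Fin.last (n+1)) 1) = -1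
  rw [mB_single_right, if_pos (Fin.val_last (n+1))]
  rw [eLv_atL]
  ring

lemma e1v_eLv (hn : 0 < n) : mB n (e1v n) (eLv n) = 0 := by
  show mB n (e1v n) (Pi.single (Fin.last (n+1)) 1) = 0
  rw [mB_single_right, if_pos (Fin.val_last (n+1))]
  rw [e1v_atL hn]
  ring

lemma eLv_e1v (hn : 0 < n) : mB n (eLv n) (e1v n) = 0 := by
  rw [mB_symm]; exact e1v_eLv hn

lemma e0v_e1v : mB n (e0v n) (e1v n) = 0 := by
  rw [mB_e0v']; exact e1v_at0

lemma e1v_e0v : mB n (e1v n) (e0v n) = 0 := by rw [mB_symm]; exact e0v_e1v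

lemma e0v_eLv : mB n (e0v n) (eLv n) = 0 := by
  rw [mB_e0v']; exact eLv_at0

lemma eLv_e0v : mB n (eLv n) (e0v n) = 0 := by rw [mB_symm]; exact e0v_eLv

/-- Any normalized pair of spacelike unit vectors spanning distinct lines can be
moved to the canonical pair by an isometry. -/
lemma to_canonical (hn : 0 < n) (nv mv : Fin (n+2) → ℝ)
    (hnv : mB n nv nv = 1) (hmv : mB n mv mv = 1)
    (hne : Submodule.span ℝ {nv} ≠ Submodule.span ℝ {mv}) :
    ∃ g : (Fin (n+2) → ℝ) ≃ₗ[ℝ] (Fin (n+2) → ℝ),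
      (∀ x y, mB n (g x) (g y) = mB n x y) ∧
      g nv = e0v n ∧ g mv = canon n (mB n nv mv) := by
  set t := mB n nv mv with ht
  obtain ⟨g1, hg1iso, hg1n, -⟩ :=
    exists_isometry_nonzero nv (e0v n) (by rw [hnv, e0v_e0v]) (by rw [hnv]; norm_num)
  set m1 := g1 mv with hm1def
  have hm1m1 : mB n m1 m1 = 1 := by rw [hm1def, hg1iso, hmv]
  have he0m1 : mB n (e0v n) m1 = t := by
    have h := hg1iso nv mv
    rwa [hg1n, ← hm1def, ← ht] at h
  have hm10 : m1 0 = t := by rw [← mB_e0v m1, mB_symm]; exact he0m1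
  set u : Fin (n+2) → ℝ := m1 - t • e0v n with hu
  set u' : Fin (n+2) → ℝ := ((2 - t^2)/2) • e1v n + (-(t^2)/2) • eLv n with hu'
  have hm1u : m1 = u + t • e0v n := by rw [hu]; abel
  have hcanon : canon n t = u' + t • e0v n := by rw [canon, hu']; abel
  have hm1e0 : mB n m1 (e0v n) = t := by rw [mB_e0v]; exact hm10
  have huu : mB n u u = 1 - t^2 := by
    rw [hu]
    simp only [map_sub, map_smul, LinearMap.sub_apply, LinearMap.smul_apply, smul_eq_mul]
    rw [hm1m1, hm1e0, he0m1, e0v_e0v]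
    ring
  have hu'u' : mB n u' u' = 1 - t^2 := by
    rw [hu']
    simp only [map_add, map_smul, LinearMap.add_apply, LinearMap.smul_apply, smul_eq_mul]
    rw [e1v_e1v hn, eLv_eLv, e1v_eLv hn, eLv_e1v hn]
    ring
  have he0u : mB n (e0v n) u = 0 := by
    rw [hu, map_sub, map_smul, smul_eq_mul, he0m1, e0v_e0v]
    ring
  have he0u' : mB n (e0v n) u' = 0 := by
    rw [hu', map_add, map_smul, map_smul, smul_eq_mul, smul_eq_mul, e0v_e1v, e0v_eLv]
    ring
  have hue0 : mB n u (e0v n) = 0 := by rw [mB_symm]; exact he0u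
  have hu'e0 : mB n u' (e0v n) = 0 := by rw [mB_symm]; exact he0u'
  have hu0 : u 0 = 0 := by
    rw [hu]
    simp only [Pi.sub_apply, Pi.smul_apply, smul_eq_mul, hm10, e0v_at0]
    ring
  have hu'0 : u' 0 = 0 := by
    rw [hu']
    simp only [Pi.add_apply, Pi.smul_apply, smul_eq_mul, e1v_at0, eLv_at0]
    ring
  have hune : u ≠ 0 := by
    intro h
    have hm1e : m1 = t • e0v n := by rw [hm1u, h, zero_add]
    have ht2 : t * t = 1 := by
      have h2 := hm1m1
      rw [hm1e] at h2
      simp only [map_smul, LinearMap.smul_apply, smul_eq_mul, e0v_e0v] at h2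
      linarith
    have htne : t ≠ 0 := by
      intro h0; rw [h0] at ht2; norm_num at ht2
    have hmveq : mv = t • nv := by
      apply g1.injective
      rw [map_smul, hg1n, ← hm1def, hm1e]
    apply hne
    rw [hmveq, Submodule.span_singleton_smul_eq (isUnit_iff_ne_zero.mpr htne)]
  have hu'ne : u' ≠ 0 := by
    intro h
    have h1 := congrFun h 1
    have h2 := congrFun h (Fin.last (n+1))
    rw [hu'] at h1 h2
    simp only [Pi.add_apply, Pi.smul_apply, smul_eq_mul, Pi.zero_apply,
      e1v_at1, eLv_at1 hn, e1v_atL hn, eLv_atL] at h1 h2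
    have h3 : (2 - t^2)/2 - (-(t^2)/2) = 1 := by ring
    rw [show (2 - t^2)/2 = 0 by linarith, show -(t^2)/2 = 0 by linarith] at h3
    norm_num at h3
  have key : ∃ g2 : (Fin (n+2) → ℝ) ≃ₗ[ℝ] (Fin (n+2) → ℝ),
      (∀ x y, mB n (g2 x) (g2 y) = mB n x y) ∧ g2 u = u' ∧ g2 (e0v n) = e0v n := by
    by_cases hs : mB n u u ≠ 0
    · obtain ⟨g2, hg2iso, hg2u, hg2fix⟩ :=
        exists_isometry_nonzero u u' (by rw [huu, hu'u']) hs
      exact ⟨g2, hg2iso, hg2u, hg2fix _ he0u he0u'⟩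
    · push_neg at hs
      have hs' : mB n u' u' = 0 := by rw [hu'u', ← huu, hs]
      exact exists_isometry_isotropic u u' hu0 hu'0 hs hs' hune hu'ne
  obtain ⟨g2, hg2iso, hg2u, hg2e0⟩ := key
  refine ⟨g1.trans g2, ?_, ?_, ?_⟩
  · intro x y
    simp only [LinearEquiv.trans_apply]
    rw [hg2iso, hg1iso]
  · simp only [LinearEquiv.trans_apply]
    rw [hg1n, hg2e0]
  · simp only [LinearEquiv.trans_apply]
    rw [← hm1def, hm1u, map_add, map_smul, hg2u, hg2e0, hcanon]

end MBaux

open MBaux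

/-- Two pairs of distinct hyperspheres, represented by spacelike unit vectors,
are Möbius-equivalent iff the absolute values of the scalar products of the
representing vectors coincide. -/
theorem pairs_of_hyperspheres_equivalent_iff
    (n : ℕ) (hn : 0 < n) (nv mv nv' mv' : Fin (n+2) → ℝ)
    (hnv : mB n nv nv = 1) (hmv : mB n mv mv = 1)
    (hnv' : mB n nv' nv' = 1) (hmv' : mB n mv' mv' = 1)
    (hne : Submodule.span ℝ {nv} ≠ Submodule.span ℝ {mv})
    (hne' : Submodule.span ℝ {nv'} ≠ Submodule.span ℝ {mv'}) :
    (∃ g : (Fin (n+2) → ℝ) ≃ₗ[ℝ] (Fin (n+2) → ℝ),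
        (∀ x y, mB n (g x) (g y) = mB n x y) ∧
        (Submodule.span ℝ {nv}).map g.toLinearMap = Submodule.span ℝ {nv'} ∧
        (Submodule.span ℝ {mv}).map g.toLinearMap = Submodule.span ℝ {mv'}) ↔
      |mB n nv mv| = |mB n nv' mv'| := by
  constructor
  · rintro ⟨g, hgiso, hgn, hgm⟩
    have hgn' : g nv ∈ Submodule.span ℝ {nv'} := by
      rw [← hgn]
      exact Submodule.mem_map_of_mem (Submodule.mem_span_singleton_self nv)
    have hgm' : g mv ∈ Submodule.span ℝ {mv'} := by
      rw [← hgm]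
      exact Submodule.mem_map_of_mem (Submodule.mem_span_singleton_self mv)
    obtain ⟨c, hc⟩ := Submodule.mem_span_singleton.mp hgn'
    obtain ⟨d, hd⟩ := Submodule.mem_span_singleton.mp hgm'
    have hc2 : c^2 = 1 := by
      have h := hgiso nv nv
      rw [← hc, hnv] at h
      simp only [map_smul, LinearMap.smul_apply, smul_eq_mul, hnv'] at h
      nlinarith
    have hd2 : d^2 = 1 := by
      have h := hgiso mv mv
      rw [← hd, hmv] at h
      simp only [map_smul, LinearMap.smul_apply, smul_eq_mul, hmv'] at h
      nlinarith
    have hkey : mB n nv mv = c * d * mB n nv' mv' := by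
      have h := hgiso nv mv
      rw [← hc, ← hd] at h
      simp only [map_smul, LinearMap.smul_apply, smul_eq_mul] at h
      rw [← h]; ring
    rw [hkey, abs_mul, abs_mul]
    have hca : |c| = 1 := by
      have := sq_abs c
      nlinarith [abs_nonneg c]
    have hda : |d| = 1 := by
      have := sq_abs d
      nlinarith [abs_nonneg d]
    rw [hca, hda]
    ring
  · intro habs
    obtain ⟨gA, hAiso, hAn, hAm⟩ := to_canonical hn nv mv hnv hmv hne
    rcases abs_eq_abs.mp habs with h | h
    · obtain ⟨gB, hBiso, hBn, hBm⟩ := to_canonical hn nv' mv' hnv' hmv' hne'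
      have hBsymm : ∀ x y, mB n (gB.symm x) (gB.symm y) = mB n x y := by
        intro x y
        have h2 := hBiso (gB.symm x) (gB.symm y)
        rw [gB.apply_symm_apply, gB.apply_symm_apply] at h2
        exact h2.symm
      refine ⟨gA.trans gB.symm, ?_, ?_, ?_⟩
      · intro x y
        simp only [LinearEquiv.trans_apply]
        rw [hBsymm, hAiso]
      · rw [Submodule.map_span, Set.image_singleton]
        have : (gA.trans gB.symm) nv = nv' := by
          simp only [LinearEquiv.trans_apply]
          rw [hAn, ← hBn, gB.symm_apply_apply]
        rw [show (gA.trans gB.symm).toLinearMap nv = (gA.trans gB.symm) nv from rfl, this]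
      · rw [Submodule.map_span, Set.image_singleton]
        have : (gA.trans gB.symm) mv = mv' := by
          simp only [LinearEquiv.trans_apply]
          rw [hAm, h, ← hBm, gB.symm_apply_apply]
        rw [show (gA.trans gB.symm).toLinearMap mv = (gA.trans gB.symm) mv from rfl, this]
    · -- mB n nv mv = -(mB n nv' mv') : use the pair (nv', -mv')
      have hmm : mB n (-mv') (-mv') = 1 := by
        simp only [map_neg, LinearMap.neg_apply, neg_neg]
        exact hmv'
      have hspan : Submodule.span ℝ {-mv'} = Submodule.span ℝ ({mv'} : Set (Fin (n+2) → ℝ)) := by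
        rw [show -mv' = (-1 : ℝ) • mv' by module,
          Submodule.span_singleton_smul_eq (by norm_num : IsUnit (-1 : ℝ))]
      have hne'' : Submodule.span ℝ {nv'} ≠ Submodule.span ℝ ({-mv'} : Set (Fin (n+2) → ℝ)) := by
        rw [hspan]; exact hne'
      obtain ⟨gB, hBiso, hBn, hBm⟩ := to_canonical hn nv' (-mv') hnv' hmm hne''
      have hteq : mB n nv' (-mv') = mB n nv mv := by
        rw [map_neg, h]
      have hBsymm : ∀ x y, mB n (gB.symm x) (gB.symm y) = mB n x y := by
        intro x y
        have h2 := hBiso (gB.symm x) (gB.symm y)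
        rw [gB.apply_symm_apply, gB.apply_symm_apply] at h2
        exact h2.symm
      refine ⟨gA.trans gB.symm, ?_, ?_, ?_⟩
      · intro x y
        simp only [LinearEquiv.trans_apply]
        rw [hBsymm, hAiso]
      · rw [Submodule.map_span, Set.image_singleton]
        have : (gA.trans gB.symm) nv = nv' := by
          simp only [LinearEquiv.trans_apply]
          rw [hAn, ← hBn, gB.symm_apply_apply]
        rw [show (gA.trans gB.symm).toLinearMap nv = (gA.trans gB.symm) nv from rfl, this]
      · rw [Submodule.map_span, Set.image_singleton]
        have hmapm : (gA.trans gB.symm) mv = -mv' := by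
          simp only [LinearEquiv.trans_apply]
          rw [hAm, ← hteq, ← hBm, gB.symm_apply_apply]
        rw [show (gA.trans gB.symm).toLinearMap mv = (gA.trans gB.symm) mv from rfl, hmapm,
          hspan]
end
end

section
/- Let n, m ∈ V be spacelike vectors with B n n = B m m = 1 and span{n} ≠ span{m}, and let P = {x ∈ V : B x n = 0 and B x m = 0} (the subspace defining the intersection of the two distinct hyperspheres S(n) and S(m)). Then: (i) if |B n m| < 1, then P contains a timelike vector (so P is pseudo-euclidean and the hyperspheres intersect in an (n−2)-sphere); (ii) if |B n m| > 1, then B is positive definite on P (so P contains no nonzero isotropic vector and the hyperspheres are disjoint); (iii) if |B n m| = 1, then B restricted to P is degenerate and the set {x ∈ P : B x x = 0} of isotropic vectors of P is a one-dimensional linear subspace (so the hyperspheres are tangent, having exactly one common point). -/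
noncomputable section

lemma mB_apply' (n : ℕ) (x y : Fin (n+2) → ℝ) :
    mB n x y = ∑ i : Fin (n+2), (if (i : ℕ) = n+1 then (-1:ℝ) else 1) * x i * y i := rfl

lemma mB_split (n : ℕ) (x y : Fin (n+2) → ℝ) :
    mB n x y = (∑ i : Fin (n+1), x i.castSucc * y i.castSucc)
      - x (Fin.last (n+1)) * y (Fin.last (n+1)) := by
  rw [mB_apply', Fin.sum_univ_castSucc]
  have h1 : ((Fin.last (n+1) : Fin (n+2)) : ℕ) = n+1 := rfl
  rw [h1, if_pos rfl]
  rw [Finset.sum_congr rfl (fun i _ => by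
    rw [Fin.coe_castSucc, if_neg (Nat.ne_of_lt i.isLt)] : ∀ i ∈ Finset.univ,
      (if ((i : Fin (n+1)).castSucc : ℕ) = n+1 then (-1:ℝ) else 1) * x i.castSucc * y i.castSucc
        = 1 * x i.castSucc * y i.castSucc)]
  simp; ring

lemma mB_comm (n : ℕ) (x y : Fin (n+2) → ℝ) : mB n x y = mB n y x := by
  rw [mB_apply', mB_apply']; exact Finset.sum_congr rfl fun i _ => by ring

lemma eq_zero_of_parts (n : ℕ) (x : Fin (n+2) → ℝ)
    (h1 : ∑ i : Fin (n+1), x i.castSucc * x i.castSucc = 0)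
    (h2 : x (Fin.last (n+1)) = 0) : x = 0 := by
  funext j
  induction j using Fin.lastCases with
  | last => exact h2
  | cast i =>
    have := (Finset.sum_eq_zero_iff_of_nonneg
      (fun i _ => mul_self_nonneg (x i.castSucc))).mp h1 i (Finset.mem_univ i)
    exact mul_self_eq_zero.mp this

lemma timelike_perp (n : ℕ) (w x : Fin (n+2) → ℝ) (hw : mB n w w < 0)
    (hxw : mB n x w = 0) (hx : x ≠ 0) : 0 < mB n x x := by
  set L := Fin.last (n+1) with hL
  set A := ∑ i : Fin (n+1), x i.castSucc * x i.castSucc with hA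
  set B := ∑ i : Fin (n+1), w i.castSucc * w i.castSucc with hB
  have hA0 : 0 ≤ A := Finset.sum_nonneg fun i _ => mul_self_nonneg _
  have hB0 : 0 ≤ B := Finset.sum_nonneg fun i _ => mul_self_nonneg _
  have hww := mB_split n w w
  have hxw' := mB_split n x w
  have hxx := mB_split n x x
  rw [hxw] at hxw'
  have CS : (∑ i : Fin (n+1), x i.castSucc * w i.castSucc) ^ 2 ≤ A * B := by
    have h := Finset.sum_mul_sq_le_sq_mul_sq Finset.univ
      (fun i : Fin (n+1) => x i.castSucc) (fun i => w i.castSucc)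
    have e1 : A = ∑ i : Fin (n+1), x i.castSucc ^ 2 :=
      Finset.sum_congr rfl fun i _ => (sq _).symm
    have e2 : B = ∑ i : Fin (n+1), w i.castSucc ^ 2 :=
      Finset.sum_congr rfl fun i _ => (sq _).symm
    rw [e1, e2]; exact h
  by_contra hle
  push_neg at hle
  rw [hxx] at hle
  have hBb : B < w L * w L := by rw [hww] at hw; linarith
  have hSxw : ∑ i : Fin (n+1), x i.castSucc * w i.castSucc = x L * w L := by linarith
  rw [hSxw] at CS
  have haz : x L = 0 := by
    by_contra ha
    have ha2 : 0 < x L * x L := mul_self_pos.mpr ha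
    nlinarith [mul_le_mul_of_nonneg_right (show A ≤ x L * x L by linarith) hB0,
      mul_lt_mul_of_pos_left hBb ha2]
  have hAz : A = 0 := le_antisymm (by rw [haz] at hle; nlinarith) hA0
  exact hx (eq_zero_of_parts n x hAz haz)

lemma null_perp (n : ℕ) (w x : Fin (n+2) → ℝ) (hw : mB n w w = 0)
    (hxx : mB n x x = 0) (hxw : mB n x w = 0) (hwne : w ≠ 0) :
    ∃ c : ℝ, x = c • w := by
  set L := Fin.last (n+1) with hL
  have hbne : w L ≠ 0 := by
    intro hb
    apply hwne
    apply eq_zero_of_parts n w _ hb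
    have := mB_split n w w
    rw [hw, hb] at this; linarith
  set c := x L / w L with hc
  refine ⟨c, ?_⟩
  have hz : x - c • w = 0 := by
    apply eq_zero_of_parts n
    · have hzz : mB n (x - c • w) (x - c • w) = 0 := by
        simp only [map_sub, map_smul, LinearMap.sub_apply, LinearMap.smul_apply, smul_eq_mul]
        rw [mB_comm n w x, hxx, hxw, hw]; ring
      have hsplit := mB_split n (x - c • w) (x - c • w)
      have hlast : (x - c • w) L = 0 := by
        simp only [Pi.sub_apply, Pi.smul_apply, smul_eq_mul, hc]
        field_simp; ring
      rw [hzz, hlast] at hsplit; linarith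
    · simp only [Pi.sub_apply, Pi.smul_apply, smul_eq_mul, hc]
      field_simp
      show x L * w L - x L * w L = w L * 0; ring
  have := sub_eq_zero.mp hz
  exact this
/-- Geometric interpretation of the invariant `|B n m|` of a pair of distinct
hyperspheres, through the subspace `P = {x | B x n = 0 ∧ B x m = 0}` defining
their intersection: for `|B n m| < 1` the hyperspheres intersect (P contains a
timelike vector), for `|B n m| > 1` they are disjoint (B is positive definite
on P), and for `|B n m| = 1` they are tangent (B|P is degenerate and the
isotropic vectors of P form a one-dimensional subspace). -/
theorem hyperspheres_intersect_disjoint_tangent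
    (n : ℕ) (hn : 0 < n) (nv mv : Fin (n+2) → ℝ)
    (hnv : mB n nv nv = 1) (hmv : mB n mv mv = 1)
    (hne : Submodule.span ℝ {nv} ≠ Submodule.span ℝ {mv}) :
    (|mB n nv mv| < 1 →
      ∃ x : Fin (n+2) → ℝ, (mB n x nv = 0 ∧ mB n x mv = 0) ∧ mB n x x < 0) ∧
    (1 < |mB n nv mv| →
      ∀ x : Fin (n+2) → ℝ, mB n x nv = 0 → mB n x mv = 0 → x ≠ 0 → 0 < mB n x x) ∧
    (|mB n nv mv| = 1 →
      (∃ x : Fin (n+2) → ℝ, (mB n x nv = 0 ∧ mB n x mv = 0) ∧ x ≠ 0 ∧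
          ∀ y : Fin (n+2) → ℝ, mB n y nv = 0 → mB n y mv = 0 → mB n x y = 0) ∧
      (∃ v : Fin (n+2) → ℝ, v ≠ 0 ∧
          {x : Fin (n+2) → ℝ | (mB n x nv = 0 ∧ mB n x mv = 0) ∧ mB n x x = 0} =
            (Submodule.span ℝ {v} : Set (Fin (n+2) → ℝ)))) := by
  set t := mB n nv mv with htdef
  have hmn : mB n mv nv = t := (mB_comm n mv nv)
  refine ⟨?_, ?_, ?_⟩
  · -- case |t| < 1 : intersecting
    intro h
    have ht2 : t ^ 2 < 1 := by
      have := abs_lt.mp h; nlinarith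
    have hd : (0:ℝ) < 1 - t ^ 2 := by linarith
    set e : Fin (n+2) → ℝ := fun i => if i = Fin.last (n+1) then 1 else 0 with he
    have hee : mB n e e = -1 := by
      rw [mB_split]
      have h0 : ∀ i : Fin (n+1), e i.castSucc = 0 := fun i => by
        simp only [he, if_neg (Fin.castSucc_lt_last i).ne]
      have hs : (∑ i : Fin (n+1), e i.castSucc * e i.castSucc) = 0 :=
        Finset.sum_eq_zero fun i _ => by rw [h0]; ring
      have hl : e (Fin.last (n+1)) = 1 := by simp [he]
      rw [hs, hl]; ring
    set α := mB n e nv with hα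
    set β := mB n e mv with hβ
    set a := (α - t * β) / (1 - t ^ 2) with hadef
    set b := (β - t * α) / (1 - t ^ 2) with hbdef
    have ha : a + b * t = α := by
      rw [hadef, hbdef]; field_simp; ring
    have hb : a * t + b = β := by
      rw [hadef, hbdef]; field_simp; ring
    refine ⟨e - a • nv - b • mv, ⟨?_, ?_⟩, ?_⟩
    · simp only [map_sub, map_smul, LinearMap.sub_apply, LinearMap.smul_apply, smul_eq_mul]
      rw [hnv, hmn, ← hα]; linarith
    · simp only [map_sub, map_smul, LinearMap.sub_apply, LinearMap.smul_apply, smul_eq_mul]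
      rw [hmv, ← htdef, ← hβ]; linarith
    · simp only [map_sub, map_smul, LinearMap.sub_apply, LinearMap.smul_apply, smul_eq_mul]
      rw [hee, hnv, hmv, hmn, ← htdef, ← hα, ← hβ,
        mB_comm n nv e, mB_comm n mv e, ← hα, ← hβ]
      rw [← ha, ← hb]
      nlinarith [sq_nonneg (a + t * b), mul_nonneg hd.le (sq_nonneg b)]
  · -- case |t| > 1 : disjoint
    intro h x hxn hxm hx0
    have ht2 : 1 < t ^ 2 := by
      have h0 : 0 ≤ |t| := abs_nonneg t
      nlinarith [sq_abs t]
    have htne : t ≠ 0 := by intro h0; rw [h0] at ht2; norm_num at ht2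
    have hww : mB n (nv - t⁻¹ • mv) (nv - t⁻¹ • mv) < 0 := by
      simp only [map_sub, map_smul, LinearMap.sub_apply, LinearMap.smul_apply, smul_eq_mul]
      rw [hnv, hmv, hmn, ← htdef]
      have hu : 0 < t⁻¹ ^ 2 := by positivity
      have hut : t⁻¹ ^ 2 * t ^ 2 = 1 := by field_simp
      have hti : t⁻¹ * t = 1 := inv_mul_cancel₀ htne
      nlinarith [hti, hut, mul_pos hu (show (0:ℝ) < t ^ 2 - 1 by linarith)]
    have hxw : mB n x (nv - t⁻¹ • mv) = 0 := by
      simp only [map_sub, map_smul, LinearMap.sub_apply, LinearMap.smul_apply, smul_eq_mul]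
      rw [hxn, hxm]; ring
    exact timelike_perp n (nv - t⁻¹ • mv) x hww hxw hx0
  · -- case |t| = 1 : tangent
    intro h
    have ht2 : t ^ 2 = 1 := by
      have := sq_abs t; rw [h] at this; linarith
    have htne : t ≠ 0 := by intro h0; rw [h0] at ht2; norm_num at ht2
    set w : Fin (n+2) → ℝ := nv - t • mv with hw
    have hwn : mB n w nv = 0 := by
      rw [hw]
      simp only [map_sub, map_smul, LinearMap.sub_apply, LinearMap.smul_apply, smul_eq_mul]
      rw [hnv, hmn]; nlinarith
    have hwm : mB n w mv = 0 := by
      rw [hw]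
      simp only [map_sub, map_smul, LinearMap.sub_apply, LinearMap.smul_apply, smul_eq_mul]
      rw [hmv, ← htdef]; ring
    have hww : mB n w w = 0 := by
      rw [hw]
      simp only [map_sub, map_smul, LinearMap.sub_apply, LinearMap.smul_apply, smul_eq_mul]
      rw [hnv, hmv, hmn, ← htdef]; nlinarith
    have hwne : w ≠ 0 := by
      intro h0
      apply hne
      have : nv = t • mv := by rwa [hw, sub_eq_zero] at h0
      rw [this]
      exact Submodule.span_singleton_smul_eq (IsUnit.mk0 t htne) mv
    constructor
    · refine ⟨w, ⟨hwn, hwm⟩, hwne, fun y hyn hym => ?_⟩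
      rw [hw]
      simp only [map_sub, map_smul, LinearMap.sub_apply, LinearMap.smul_apply, smul_eq_mul]
      rw [mB_comm n nv y, mB_comm n mv y, hyn, hym]; ring
    · refine ⟨w, hwne, ?_⟩
      ext x
      simp only [Set.mem_setOf_eq, SetLike.mem_coe, Submodule.mem_span_singleton]
      constructor
      · rintro ⟨⟨hxn, hxm⟩, hxx⟩
        have hxw : mB n x w = 0 := by
          rw [hw]
          simp only [map_sub, map_smul, LinearMap.sub_apply, LinearMap.smul_apply, smul_eq_mul]
          rw [hxn, hxm]; ring
        obtain ⟨c, hc⟩ := null_perp n w x hww hxx hxw hwne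
        exact ⟨c, hc.symm⟩
      · rintro ⟨c, rfl⟩
        refine ⟨⟨?_, ?_⟩, ?_⟩
        · simp only [map_smul, LinearMap.smul_apply, smul_eq_mul, hwn]; ring
        · simp only [map_smul, LinearMap.smul_apply, smul_eq_mul, hwm]; ring
        · simp only [map_smul, LinearMap.smul_apply, smul_eq_mul, hww]; ring
end
end

section
/- For every x ∈ W^⊥ one has B x (A x) = B (p x) (p x) ≥ 0; every eigenvalue α of A (i.e. A v = α • v for some nonzero v ∈ W^⊥) satisfies α ≥ 0; and for x ∈ W^⊥ one has A x = 0 if and only if p x = 0 if and only if x ∈ U, so the kernel of A equals W^⊥ ∩ U. -/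
noncomputable section

/-!
Splitting off the time coordinate, `B x y = ⟨x₀, y₀⟩ - x_t y_t`. If `u` is timelike and
`B x u = 0`, then `x_t u_t = ⟨x₀, u₀⟩`, and Cauchy–Schwarz together with `|u₀|² < u_t²` forces
`x_t² < |x₀|²` unless `x = 0`; so `B` is positive definite on the orthogonal complement of any
timelike vector, in particular on `U^⊥` and `W^⊥`. For `x ∈ W^⊥`, since `p x - p' (p x) ∈ W` and
`x - p x ∈ U`, one gets `B x (A x) = B x (p x) = B (p x) (p x)`; for an eigenvector `v` this
reads `α B v v = B (p v) (p v) ≥ 0` with `B v v > 0`.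
-/

namespace Minkowski

variable {n : ℕ}

theorem mB_apply (x y : Fin (n+2) → ℝ) :
    mB n x y = (∑ i : Fin (n+1), x i.castSucc * y i.castSucc)
      - x (Fin.last (n+1)) * y (Fin.last (n+1)) := by
  change ∑ i : Fin (n+2), (if (i : ℕ) = n+1 then (-1:ℝ) else 1) * x i * y i = _
  rw [Fin.sum_univ_castSucc, sub_eq_add_neg]
  congr 1
  · exact Finset.sum_congr rfl fun i _ => by simp [i.isLt.ne]
  · simp

theorem mB_comm (x y : Fin (n+2) → ℝ) : mB n x y = mB n y x := by
  simp only [mB_apply, mul_comm (x _) (y _)]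

theorem mB_self_pos_of_perp_timelike {u x : Fin (n+2) → ℝ}
    (hu : mB n u u < 0) (hxu : mB n x u = 0) (hx : x ≠ 0) : 0 < mB n x x := by
  rw [mB_apply] at hu hxu ⊢
  set S := ∑ i : Fin (n+1), x i.castSucc * x i.castSucc
  set T := ∑ i : Fin (n+1), u i.castSucc * u i.castSucc
  set a := x (Fin.last (n+1))
  set b := u (Fin.last (n+1))
  have hS : 0 ≤ S := Finset.sum_nonneg fun i _ => mul_self_nonneg _
  have hT : 0 ≤ T := Finset.sum_nonneg fun i _ => mul_self_nonneg _
  have hCS : (∑ i : Fin (n+1), x i.castSucc * u i.castSucc) ^ 2 ≤ S * T := by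
    simpa only [sq] using Finset.sum_mul_sq_le_sq_mul_sq Finset.univ
      (fun i : Fin (n+1) => x i.castSucc) (fun i => u i.castSucc)
  by_contra! hxx
  have hlast : a = 0 := by
    have hb : 0 < b ^ 2 - T := by linarith [sq b]
    have : a ^ 2 * b ^ 2 ≤ a ^ 2 * T := calc
      a ^ 2 * b ^ 2 = (∑ i : Fin (n+1), x i.castSucc * u i.castSucc) ^ 2 := by
        rw [sub_eq_zero.mp hxu]; ring
      _ ≤ S * T := hCS
      _ ≤ a ^ 2 * T := by nlinarith
    have ha : a ^ 2 ≤ 0 := nonpos_of_mul_nonpos_left (by linarith) hb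
    exact pow_eq_zero_iff two_ne_zero |>.mp (le_antisymm ha (sq_nonneg a))
  have hS0 : S = 0 := by nlinarith
  have hspace : ∀ i : Fin (n+1), x i.castSucc = 0 := fun i =>
    mul_self_eq_zero.mp <| (Finset.sum_eq_zero_iff_of_nonneg fun i _ =>
      mul_self_nonneg (x (Fin.castSucc i))).mp hS0 i (Finset.mem_univ i)
  exact hx <| funext fun i => Fin.lastCases hlast hspace i

theorem mB_self_pos_of_mem_mperp {S : Submodule ℝ (Fin (n+2) → ℝ)}
    (hS : ∃ u ∈ S, mB n u u < 0) {x : Fin (n+2) → ℝ} (hx : x ∈ mperp n S) (hx0 : x ≠ 0) :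
    0 < mB n x x :=
  let ⟨u, huS, hu⟩ := hS
  mB_self_pos_of_perp_timelike hu (hx u huS) hx0

theorem mB_self_nonneg_of_mem_mperp {S : Submodule ℝ (Fin (n+2) → ℝ)}
    (hS : ∃ u ∈ S, mB n u u < 0) {x : Fin (n+2) → ℝ} (hx : x ∈ mperp n S) :
    0 ≤ mB n x x := by
  rcases eq_or_ne x 0 with rfl | hx0
  · simp
  · exact (mB_self_pos_of_mem_mperp hS hx hx0).le

theorem mB_eq_mB_self_of_proj {W U : Submodule ℝ (Fin (n+2) → ℝ)} {x y z : Fin (n+2) → ℝ}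
    (hx : x ∈ mperp n W) (hy : y ∈ mperp n U) (hxy : x - y ∈ U) (hyz : y - z ∈ W) :
    mB n x z = mB n y y := by
  have hxz : mB n x (y - z) = 0 := hx _ hyz
  have hyx : mB n y (x - y) = 0 := hy _ hxy
  rw [map_sub, sub_eq_zero] at hxz hyx
  rw [← hxz, mB_comm, hyx]

end Minkowski

open Minkowski in
theorem A_nonneg_eigenvalues_and_kernel_general
    (n : ℕ) (W U : Submodule ℝ (Fin (n+2) → ℝ))
    (hW : IsPseudoEuclidean n W) (hU : IsPseudoEuclidean n U)
    (p p' : (Fin (n+2) → ℝ) →ₗ[ℝ] (Fin (n+2) → ℝ))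
    (hp : ∀ x, p x ∈ mperp n U ∧ x - p x ∈ U)
    (hp' : ∀ x, p' x ∈ mperp n W ∧ x - p' x ∈ W)
     :
    (∀ x ∈ mperp n W,
      mB n x (p' (p x)) = mB n (p x) (p x) ∧ 0 ≤ mB n (p x) (p x)) ∧
    (∀ (α : ℝ), ∀ v ∈ mperp n W, v ≠ 0 → p' (p v) = α • v → 0 ≤ α) ∧
    (∀ x ∈ mperp n W, (p' (p x) = 0 ↔ p x = 0) ∧ (p x = 0 ↔ x ∈ U)) := by
  have key : ∀ x ∈ mperp n W, mB n x (p' (p x)) = mB n (p x) (p x) := fun x hx =>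
    mB_eq_mB_self_of_proj hx (hp x).1 (hp x).2 (hp' (p x)).2
  have hpos : ∀ x, 0 ≤ mB n (p x) (p x) := fun x => mB_self_nonneg_of_mem_mperp hU.2 (hp x).1
  refine ⟨fun x hx => ⟨key x hx, hpos x⟩, fun α v hv hv0 heig => ?_, fun x hx => ⟨?_, ?_⟩⟩
  · have hvv : 0 < mB n v v := mB_self_pos_of_mem_mperp hW.2 hv hv0
    have : α * mB n v v = mB n (p v) (p v) := by
      rw [← key v hv, heig, map_smul, smul_eq_mul]
    exact nonneg_of_mul_nonneg_left (this ▸ hpos v) hvv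
  · refine ⟨fun h => ?_, fun h => by rw [h, map_zero]⟩
    by_contra hpx
    have := mB_self_pos_of_mem_mperp hU.2 (hp x).1 hpx
    rw [← key x hx, h, map_zero] at this
    exact lt_irrefl 0 this
  · refine ⟨fun h => by simpa [h] using (hp x).2, fun hxU => ?_⟩
    have hpxU : p x ∈ U := by simpa using U.sub_mem hxU (hp x).2
    exact hU.1 _ hpxU (hp x).1

/-- `B x (A x) = B (p x) (p x) ≥ 0` on `W^⊥`; every eigenvalue of `A` is
nonnegative; and the kernel of `A` on `W^⊥` is `W^⊥ ∩ U`. -/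
theorem A_nonneg_eigenvalues_and_kernel
    (n : ℕ) (hn : 0 < n) (W U : Submodule ℝ (Fin (n+2) → ℝ))
    (hW : IsPseudoEuclidean n W) (hU : IsPseudoEuclidean n U)
    (hsum : W ⊔ U = ⊤)
    (p p' : (Fin (n+2) → ℝ) →ₗ[ℝ] (Fin (n+2) → ℝ))
    (hp : ∀ x, p x ∈ mperp n U ∧ x - p x ∈ U)
    (hp' : ∀ x, p' x ∈ mperp n W ∧ x - p' x ∈ W)
     :
    (∀ x ∈ mperp n W,
      mB n x (p' (p x)) = mB n (p x) (p x) ∧ 0 ≤ mB n (p x) (p x)) ∧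
    (∀ (α : ℝ), ∀ v ∈ mperp n W, v ≠ 0 → p' (p v) = α • v → 0 ≤ α) ∧
    (∀ x ∈ mperp n W, (p' (p x) = 0 ↔ p x = 0) ∧ (p x = 0 ↔ x ∈ U)) :=
  A_nonneg_eigenvalues_and_kernel_general n W U hW hU p p' hp hp'
end
end
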